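/- For every integer n ≥ 5, the n-th Taylor coefficient of A at 0 is strictly smaller than the n-th coefficient of B: Aₙ < Bₙ, where Aₙ := iteratedDeriv n A 0 / n! and Bₙ := ((1/(2n−1))·(1/4ⁿ)·C(2n,n))². -/

import Mathlib

open Real

/-- The function `A(x) = 1 + 3x/(10 + √(4 - 3x))`. -/
noncomputable def Afun (x : ℝ) : ℝ := 1 + 3 * x / (10 + Real.sqrt (4 - 3 * x))

/-- The `n`-th Taylor coefficient of `A` at `0`. -/
noncomputable def Acoef (n : ℕ) : ℝ := iteratedDeriv n Afun 0 / (Nat.factorial n)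

/-- The `n`-th coefficient of the series `B`. -/
noncomputable def Bcoef (n : ℕ) : ℝ :=
  ((1 / (2 * (n : ℝ) - 1)) * (1 / 4 ^ n) * (Nat.choose (2 * n) n)) ^ 2

/-!
Near `0`, clearing the denominator gives `(32 + x) A(x) = 32 + x (11 - √(4 - 3x))`, so
`32 Aₙ₊₁ + Aₙ = -sₙ` for `n ≥ 1`, where `sₙ` are the Taylor coefficients of `√(4 - 3x)`.
The ODE `2 (4 - 3x) y' = -3 y` gives `sₖ₊₁ = sₖ · 3(2k - 1)/(8(k + 1))`, a ratio lying in
`[15/32, 3/4)` for `k ≥ 3`; this is what makes the bounds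
`(25/27) |sₙ₋₁| ≤ 32 Aₙ ≤ (623/648) |sₙ₋₁|` propagate from `n = 4`. Since the same ratio is at most
`Bₖ₊₂ / Bₖ₊₁ = ((2k + 1)/(2k + 4))²` for `k ≥ 4`, also `(623/648) |sₙ₋₁| < 32 Bₙ` propagates
from `n = 5`.
-/

open Filter Topology

noncomputable def taylorCoeff {𝕜 : Type*} [NontriviallyNormedField 𝕜] (f : 𝕜 → 𝕜) (n : ℕ) : 𝕜 :=
  iteratedDeriv n f 0 / n.factorial

section
variable {𝕜 : Type*} [NontriviallyNormedField 𝕜] {f g : 𝕜 → 𝕜}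

@[simp] lemma taylorCoeff_zero : taylorCoeff f 0 = f 0 := by
  simp [taylorCoeff]

lemma Filter.EventuallyEq.taylorCoeff_eq (h : f =ᶠ[𝓝 0] g) (n : ℕ) :
    taylorCoeff f n = taylorCoeff g n := by
  rw [taylorCoeff, taylorCoeff, h.iteratedDeriv_eq]

lemma taylorCoeff_const_add {n : ℕ} (hn : 0 < n) (c : 𝕜) :
    taylorCoeff (fun x => c + f x) n = taylorCoeff f n := by
  rw [taylorCoeff, taylorCoeff, iteratedDeriv_const_add hn]

lemma taylorCoeff_const_sub {n : ℕ} (hn : 0 < n) (c : 𝕜) :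
    taylorCoeff (fun x => c - f x) n = -taylorCoeff f n := by
  rw [taylorCoeff, taylorCoeff, iteratedDeriv_const_sub hn, iteratedDeriv_neg, neg_div]

lemma taylorCoeff_const_mul (c : 𝕜) (n : ℕ) :
    taylorCoeff (fun x => c * f x) n = c * taylorCoeff f n := by
  rw [taylorCoeff, taylorCoeff, iteratedDeriv_const_mul_field, mul_div_assoc]

lemma iteratedDeriv_affine_zero (a b : 𝕜) (i : ℕ) :
    iteratedDeriv i (fun x => a + b * x) 0 = if i = 0 then a else if i = 1 then b else 0 := by
  rcases i with _ | i
  · simp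
  · rw [iteratedDeriv_const_add i.succ_pos, iteratedDeriv_const_mul_field, iteratedDeriv_fun_id_zero]
    simp

variable [CharZero 𝕜]

lemma taylorCoeff_deriv (n : ℕ) :
    taylorCoeff (deriv f) n = (n + 1) * taylorCoeff f (n + 1) := by
  rw [taylorCoeff, taylorCoeff, iteratedDeriv_succ', Nat.factorial_succ]
  push_cast
  field_simp

lemma taylorCoeff_affine_mul {n : ℕ} (hf : ContDiffAt 𝕜 (n + 1) f 0) (a b : 𝕜) :
    taylorCoeff (fun x => (a + b * x) * f x) (n + 1)
      = a * taylorCoeff f (n + 1) + b * taylorCoeff f n := by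
  have hl : ContDiffAt 𝕜 (n + 1) (fun x : 𝕜 => a + b * x) 0 := by fun_prop
  rw [taylorCoeff, taylorCoeff, taylorCoeff, iteratedDeriv_fun_mul hl hf,
    Finset.sum_range_succ', Finset.sum_range_succ', Finset.sum_eq_zero]
  · simp [iteratedDeriv_affine_zero, Nat.factorial_succ]
    field_simp
    ring
  · intro i _
    simp [iteratedDeriv_affine_zero]
end

noncomputable def sqrtFun (x : ℝ) : ℝ := √(4 - 3 * x)

lemma eventually_four_sub_three_mul_pos : ∀ᶠ x in 𝓝 (0 : ℝ), 0 < 4 - 3 * x :=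
  continuousAt_const.eventually_lt (by fun_prop) (by norm_num)

lemma contDiffAt_sqrtFun (n : WithTop ℕ∞) : ContDiffAt ℝ n sqrtFun 0 :=
  (contDiffAt_const.sub (contDiffAt_const.mul contDiffAt_id)).sqrt (by norm_num)

lemma contDiffAt_Afun (n : WithTop ℕ∞) : ContDiffAt ℝ n Afun 0 :=
  contDiffAt_const.add <| (contDiffAt_const.mul contDiffAt_id).div
    (contDiffAt_const.add (contDiffAt_sqrtFun n)) (by positivity)

lemma hasDerivAt_sqrtFun {x : ℝ} (hx : 0 < 4 - 3 * x) :
    HasDerivAt sqrtFun (-3 / (2 * sqrtFun x)) x := by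
  unfold sqrtFun
  simpa using (((hasDerivAt_id x).const_mul 3).const_sub 4).sqrt hx.ne'

lemma sqrtFun_ode : (fun x => (4 + -3 * x) * deriv sqrtFun x) =ᶠ[𝓝 0]
    fun x => -3 / 2 * sqrtFun x := by
  filter_upwards [eventually_four_sub_three_mul_pos] with x hx
  have hs : sqrtFun x ^ 2 = 4 - 3 * x := sq_sqrt hx.le
  have hs0 : sqrtFun x ≠ 0 := (sqrt_pos.2 hx).ne'
  rw [(hasDerivAt_sqrtFun hx).deriv]
  field_simp
  linear_combination hs

lemma taylorCoeff_sqrtFun_succ (k : ℕ) :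
    taylorCoeff sqrtFun (k + 1) = taylorCoeff sqrtFun k * (3 * (2 * k - 1) / (8 * (k + 1))) := by
  have h := sqrtFun_ode.taylorCoeff_eq k
  rw [taylorCoeff_const_mul] at h
  rcases k with _ | k
  · have h1 := taylorCoeff_deriv (f := sqrtFun) 0
    norm_num at h h1 ⊢
    linarith
  · rw [taylorCoeff_affine_mul ((contDiffAt_sqrtFun ⊤).derivWithin le_top), taylorCoeff_deriv,
      taylorCoeff_deriv] at h
    push_cast at h ⊢
    field_simp
    linear_combination 2 * h

-- Both sides are written in the shape `c + (a + b * x) * f x` of `taylorCoeff_affine_mul`.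
lemma affine_mul_Afun_eventuallyEq : (fun x => (32 + 1 * x) * Afun x) =ᶠ[𝓝 0]
    fun x => 32 + (0 + 1 * x) * (11 - sqrtFun x) := by
  filter_upwards [eventually_four_sub_three_mul_pos] with x hx
  have hs : sqrtFun x ^ 2 = 4 - 3 * x := sq_sqrt hx.le
  have hden : 10 + sqrtFun x ≠ 0 := by positivity [sqrt_nonneg (4 - 3 * x)]
  change (32 + 1 * x) * (1 + 3 * x / (10 + sqrtFun x)) = _
  field_simp
  linear_combination x * hs

lemma Acoef_succ (n : ℕ) :
    Acoef (n + 1) = (taylorCoeff (fun x => 11 - sqrtFun x) n - Acoef n) / 32 := by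
  have h := affine_mul_Afun_eventuallyEq.taylorCoeff_eq (n + 1)
  rw [taylorCoeff_const_add n.succ_pos, taylorCoeff_affine_mul (contDiffAt_Afun _),
    taylorCoeff_affine_mul (contDiffAt_const.sub (contDiffAt_sqrtFun _)), zero_mul, zero_add,
    one_mul, one_mul] at h
  change 32 * Acoef (n + 1) + Acoef n = _ at h
  linarith

lemma sqrtFun_zero : sqrtFun 0 = 2 := by
  rw [sqrtFun, show (4 : ℝ) - 3 * 0 = 2 ^ 2 by norm_num, sqrt_sq zero_le_two]

lemma taylorCoeff_sqrtFun_neg (k : ℕ) : taylorCoeff sqrtFun (k + 1) < 0 := by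
  induction k with
  | zero => norm_num [taylorCoeff_sqrtFun_succ, sqrtFun_zero]
  | succ k ih =>
    rw [taylorCoeff_sqrtFun_succ]
    have hk : (0 : ℝ) < 2 * (k + 1 : ℕ) - 1 := by push_cast; linarith [k.cast_nonneg (α := ℝ)]
    exact mul_neg_of_neg_of_pos ih (by positivity)

lemma taylorCoeff_eleven_sub_sqrtFun (n : ℕ) :
    taylorCoeff (fun x => 11 - sqrtFun x) (n + 1) = -taylorCoeff sqrtFun (n + 1) :=
  taylorCoeff_const_sub n.succ_pos 11

lemma Acoef_zero : Acoef 0 = 1 := by simp [Acoef, Afun]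

lemma Acoef_four : Acoef 4 = 25 / 16384 := by
  norm_num [Acoef_succ, taylorCoeff_eleven_sub_sqrtFun, taylorCoeff_sqrtFun_succ, sqrtFun_zero,
    Acoef_zero]

lemma Acoef_sandwich (m : ℕ) :
    25 / 27 * -taylorCoeff sqrtFun (m + 3) ≤ 32 * Acoef (m + 4) ∧
      32 * Acoef (m + 4) ≤ 623 / 648 * -taylorCoeff sqrtFun (m + 3) := by
  induction m with
  | zero => norm_num [Acoef_four, taylorCoeff_sqrtFun_succ, sqrtFun_zero]
  | succ m ih =>
    set t := -taylorCoeff sqrtFun (m + 3)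
    set q : ℝ := 3 * (2 * (m + 3 : ℕ) - 1) / (8 * ((m + 3 : ℕ) + 1))
    have ht : 0 ≤ t := (neg_pos.2 (taylorCoeff_sqrtFun_neg (m + 2))).le
    have hs : -taylorCoeff sqrtFun (m + 1 + 3) = t * q := by
      rw [show m + 1 + 3 = m + 3 + 1 by ring, taylorCoeff_sqrtFun_succ]; ring
    have hrec := Acoef_succ (m + 4)
    rw [taylorCoeff_eleven_sub_sqrtFun] at hrec
    have hm : (0 : ℝ) ≤ m := m.cast_nonneg
    have hq₁ : 15 / 32 ≤ q := by
      rw [le_div_iff₀ (by positivity)]; push_cast; linarith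
    have hq₂ : q ≤ 3 / 4 := by
      rw [div_le_iff₀ (by positivity)]; push_cast; linarith
    rw [hs]
    constructor <;> nlinarith [mul_nonneg ht (sub_nonneg.2 hq₁), mul_nonneg ht (sub_nonneg.2 hq₂)]

lemma Bcoef_succ (n : ℕ) : Bcoef (n + 1) = Bcoef n * ((2 * n - 1) / (2 * n + 2)) ^ 2 := by
  have hc : ((n + 1 : ℕ) : ℝ) * ((2 * (n + 1)).choose (n + 1) : ℕ)
      = 2 * (2 * n + 1) * ((2 * n).choose n : ℕ) := by
    exact_mod_cast Nat.succ_mul_centralBinom_succ n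
  have hn : (2 * n - 1 : ℝ) ≠ 0 := by
    have : (2 * n : ℝ) ≠ 1 := by exact_mod_cast (by omega : 2 * n ≠ 1)
    exact sub_ne_zero.2 this
  rw [Bcoef, Bcoef, ← mul_pow]
  congr 1
  push_cast at hc ⊢
  rw [show 2 * ((n : ℝ) + 1) - 1 = 2 * n + 1 by ring]
  field_simp
  linear_combination (2 * 4 ^ n) * hc

lemma Bcoef_nonneg (n : ℕ) : 0 ≤ Bcoef n := sq_nonneg _

lemma taylorCoeff_sqrtFun_lt_Bcoef (m : ℕ) :
    623 / 648 * -taylorCoeff sqrtFun (m + 4) < 32 * Bcoef (m + 5) := by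
  induction m with
  | zero => norm_num [taylorCoeff_sqrtFun_succ, sqrtFun_zero, Bcoef, Nat.choose]
  | succ m ih =>
    set r : ℝ := 3 * (2 * (m + 4 : ℕ) - 1) / (8 * ((m + 4 : ℕ) + 1))
    set ρ : ℝ := (2 * (m + 5 : ℕ) - 1) / (2 * (m + 5 : ℕ) + 2)
    have hm : (0 : ℝ) ≤ m := m.cast_nonneg
    have hr : 0 < r := div_pos (by push_cast; linarith) (by positivity)
    have hrρ : r ≤ ρ ^ 2 := by
      rw [div_pow, div_le_div_iff₀ (by positivity) (by positivity)]
      push_cast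
      nlinarith
    calc 623 / 648 * -taylorCoeff sqrtFun (m + 1 + 4)
        = 623 / 648 * -taylorCoeff sqrtFun (m + 4) * r := by
          rw [taylorCoeff_sqrtFun_succ (m + 4)]; ring
      _ < 32 * Bcoef (m + 5) * r := by gcongr
      _ ≤ 32 * Bcoef (m + 5) * ρ ^ 2 := 
          mul_le_mul_of_nonneg_left hrρ (mul_nonneg (by norm_num) (Bcoef_nonneg _))
      _ = 32 * Bcoef (m + 1 + 5) := by rw [Bcoef_succ (m + 5)]; ring

theorem coefficients_strict_inequality (n : ℕ) (hn : 5 ≤ n) : Acoef n < Bcoef n := by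
  obtain ⟨m, rfl⟩ : ∃ m, n = m + 5 := ⟨n - 5, by omega⟩
  have hA := (Acoef_sandwich (m + 1)).2
  have hB := taylorCoeff_sqrtFun_lt_Bcoef m
  linarith
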